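/- arXiv:1611.04370 — 2 statements merged into one kernel-verified Lean document; each statement's English description precedes it below -/
import Mathlib

section
/- Let G and F be locally finite connected graphs with F one-ended, and let ψ be a partial bijection from V(G) to V(F) with dom(ψ) infinite. If dom(ψ) is dense for Ω(G) (i.e., every end of G lies in the closure of dom(ψ)), then the gluing sum G ⊕_ψ F is one-ended. -/
open SimpleGraph

variable {V W U : Type*}

/-- A walk is a *maximal internally isolated path* if it is a path, its endpoints have
degree `≠ 2`, and all internal vertices have degree `2`. -/
def IsMiiPath (G : SimpleGraph V) {u v : V} (p : G.Walk u v) : Prop :=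
  p.IsPath ∧ (G.neighborSet u).ncard ≠ 2 ∧ (G.neighborSet v).ncard ≠ 2 ∧
    ∀ w ∈ p.support, w ≠ u → w ≠ v → (G.neighborSet w).ncard = 2

/-- The mii-spectrum of a graph: lengths of its maximal internally isolated paths. -/
def miiSpectrum (G : SimpleGraph V) : Set ℕ :=
  {k | ∃ (u v : V) (p : G.Walk u v), IsMiiPath G p ∧ p.length = k}

/-- The space of ends of a graph: compatible choices of a component of the complement of
each finite vertex set. -/
def EndSpace (G : SimpleGraph V) : Type _ :=
  {f : ∀ K : Finset V, G.ComponentCompl (K : Set V) //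
    ∀ (K L : Finset V) (h : K ⊆ L), (f L).hom (by exact_mod_cast h) = f K}

instance (G : SimpleGraph V) (K : Set V) : TopologicalSpace (G.ComponentCompl K) := ⊥

instance (G : SimpleGraph V) : TopologicalSpace (EndSpace G) :=
  instTopologicalSpaceSubtype

/-- A graph is one-ended if it has exactly one end. -/
def OneEnded (G : SimpleGraph V) : Prop :=
  ∃ e : EndSpace G, ∀ e' : EndSpace G, e' = e

/-- An end is free if it is determined by its component outside some finite vertex set. -/
def IsFreeEnd {G : SimpleGraph V} (e : EndSpace G) : Prop :=
  ∃ K : Finset V, ∀ e' : EndSpace G, e'.1 K = e.1 K → e' = e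

/-- The set of ends lying in the closure of a vertex set `X`. -/
def endBoundary (G : SimpleGraph V) (X : Set V) : Set (EndSpace G) :=
  {e | ∀ K : Finset V, ((e.1 K).supp ∩ X).Infinite}

/-- The disjoint union of two graphs. -/
def sumGraph (G : SimpleGraph V) (F : SimpleGraph W) : SimpleGraph (V ⊕ W) where
  Adj x y := (∃ a b, x = Sum.inl a ∧ y = Sum.inl b ∧ G.Adj a b) ∨
    (∃ a b, x = Sum.inr a ∧ y = Sum.inr b ∧ F.Adj a b)
  symm := by
    constructor
    rintro x y (⟨a, b, rfl, rfl, h⟩ | ⟨a, b, rfl, rfl, h⟩)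
    · exact Or.inl ⟨b, a, rfl, rfl, h.symm⟩
    · exact Or.inr ⟨b, a, rfl, rfl, h.symm⟩
  loopless := by
    constructor
    rintro x (⟨a, b, rfl, h, hab⟩ | ⟨a, b, rfl, h, hab⟩) <;>
      · cases h; exact hab.ne rfl

open Classical in
/-- The setoid identifying each `v ∈ D` (in the left graph) with `ψ v` (in the right one). -/
noncomputable def glueSetoid (D : Set V) (ψ : V → W) : Setoid (V ⊕ W) :=
  Setoid.ker (Sum.elim (fun v => if v ∈ D then Sum.inr (ψ v) else (Sum.inl v : V ⊕ W)) Sum.inr)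

/-- The gluing sum `G ⊕_ψ F` of two graphs along a partial map `ψ` with domain `D`. -/
noncomputable def gluingSum (G : SimpleGraph V) (F : SimpleGraph W) (D : Set V) (ψ : V → W) :
    SimpleGraph (Quotient (glueSetoid D ψ)) :=
  SimpleGraph.fromRel (fun a b => ∃ x y : V ⊕ W,
    a = Quotient.mk (glueSetoid D ψ) x ∧ b = Quotient.mk (glueSetoid D ψ) y ∧
      (sumGraph G F).Adj x y)

/-- Two graphs are hypomorphic if there is a vertex bijection `φ` such that deleting `v`
and `φ v` always yields isomorphic graphs. -/
def Hypomorphic (G : SimpleGraph V) (H : SimpleGraph W) : Prop :=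
  ∃ φ : V ≃ W, ∀ v : V,
    Nonempty ((G.induce {u | u ≠ v}) ≃g (H.induce {u | u ≠ φ v}))

/-- The quotient setoid collapsing a subset `A` to a single point. -/
def collapseSetoid {X : Type*} (A : Set X) : Setoid X where
  r a b := a = b ∨ (a ∈ A ∧ b ∈ A)
  iseqv := by
    constructor
    · exact fun a => Or.inl rfl
    · rintro a b (rfl | ⟨ha, hb⟩); exacts [Or.inl rfl, Or.inr ⟨hb, ha⟩]
    · rintro a b c (rfl | ⟨ha, hb⟩) (rfl | ⟨hb', hc⟩)
      exacts [Or.inl rfl, Or.inr ⟨hb', hc⟩, Or.inr ⟨ha, hb⟩, Or.inr ⟨ha, hc⟩]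

/-- The one-way infinite path (ray) on `ℕ`. -/
def rayGraph : SimpleGraph ℕ :=
  SimpleGraph.fromRel (fun m n => n = m + 1)

/-- `r : ℕ → V` is a ray in `G`. -/
structure IsRay (G : SimpleGraph V) (r : ℕ → V) : Prop where
  inj : Function.Injective r
  adj : ∀ n, G.Adj (r n) (r (n + 1))

/-- Two rays are equivalent if for every finite vertex set `S` they have tails lying in,
and connected within, the same component of `G - S`. -/
def RayEquiv (G : SimpleGraph V) (r r' : ℕ → V) : Prop :=
  ∀ S : Finset V, ∃ n n' : ℕ,
    (∀ k ≥ n, r k ∉ (S : Set V)) ∧ (∀ k ≥ n', r' k ∉ (S : Set V)) ∧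
    ∃ (h : r n ∈ ((S : Set V))ᶜ) (h' : r' n' ∈ ((S : Set V))ᶜ),
      (G.induce ((S : Set V))ᶜ).Reachable ⟨r n, h⟩ ⟨r' n', h'⟩

/-!
Fix a finite vertex set `K` of `G ⊕_ψ F`. Since `F` is one-ended, `F - K` has exactly one
infinite component, and its image lies in a single component `C₀` of `(G ⊕_ψ F) - K`. Any
infinite component `C` of `(G ⊕_ψ F) - K` meets `F` infinitely often: otherwise it meets `G`
infinitely often, hence contains an infinite component of `G - K`, which by density contains
infinitely many vertices of `dom ψ`, and these are glued to vertices of `F`. So `C` meets the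
infinite component of `F - K`, i.e. `C = C₀`. A graph leaving exactly one infinite component
outside every finite set is one-ended.
-/

open CategoryTheory Opposite Set

namespace SimpleGraph

variable {X Y Z : Type*} {G : SimpleGraph X}

lemma ComponentCompl.eq_of_mem_of_mem {K : Set X} {C C' : G.ComponentCompl K} {x : X}
    (hx : x ∈ C) (hx' : x ∈ C') : C = C' :=
  hx.choose_spec.symm.trans hx'.choose_spec

lemma ComponentCompl.exists_inter_infinite {K : Set X} [Finite (G.ComponentCompl K)]
    {S : Set X} (hS : S.Infinite) (hSK : S ⊆ Kᶜ) :
    ∃ C : G.ComponentCompl K, (S ∩ C.supp).Infinite := by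
  by_contra! h
  refine hS ((Set.finite_iUnion h).subset fun x hx => ?_)
  exact Set.mem_iUnion.2 ⟨G.componentComplMk (hSK hx), hx, G.componentComplMk_mem _⟩

lemma ComponentCompl.mapsTo_of_mem {H : SimpleGraph Y} (φ : G →g H) {L : Set X} {K : Set Y}
    (hLK : MapsTo φ Lᶜ Kᶜ) {C : G.ComponentCompl L} {C' : H.ComponentCompl K} {x : X}
    (hx : x ∈ C) (hφx : φ x ∈ C') : MapsTo φ C C' := by
  have hmem : MapsTo φ C (C.map (induceHom φ hLK)) := by
    rintro y ⟨hy, rfl⟩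
    exact ⟨hLK hy, rfl⟩
  rwa [eq_of_mem_of_mem hφx (hmem hx)]

lemma exists_endSpace_apply_eq [G.LocallyFinite] [Fact G.Preconnected] {K : Finset X}
    (C : G.ComponentCompl K) (hC : C.supp.Infinite) : ∃ e : EndSpace G, e.1 K = C := by
  have : Infinite X := Set.infinite_univ_iff.1 (hC.mono (subset_univ _))
  set Φ := G.componentComplFunctor
  have : ∀ j, Finite (Φ.obj j) := fun j => G.componentCompl_finite j.unop
  have : ∀ j, Nonempty (Φ.obj j) := fun j => G.componentCompl_nonempty_of_infinite j.unop
  have hML : Φ.IsMittagLeffler :=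
    Φ.isMittagLeffler_of_exists_finite_range fun j => ⟨j, 𝟙 j, Set.toFinite _⟩
  have := Φ.toEventualRanges_nonempty hML
  have := Φ.toEventualRanges_finite
  -- Kőnig's lemma: an element of the eventual range of a finite inverse system lifts to a section.
  obtain ⟨s, hs⟩ := Φ.toEventualRanges.eval_section_surjective_of_surjective
    (Φ.surjective_toEventualRanges hML) (op K) ⟨C, (G.infinite_iff_in_eventualRange C).1 hC⟩
  set s' := Φ.toEventualRangesSectionsEquiv s
  exact ⟨⟨fun L => s'.1 (op L), fun _ _ h => s'.2 (opHomOfLE h)⟩, congrArg Subtype.val hs⟩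

lemma OneEnded.infinite (h : OneEnded G) : Infinite X := by
  by_contra hX
  rw [not_infinite_iff_finite] at hX
  have := Fintype.ofFinite X
  obtain ⟨e, -⟩ := h
  obtain ⟨x, hx, -⟩ := (e.1 Finset.univ).exists_eq_mk
  exact hx (by simp)

lemma OneEnded.eq_of_infinite [G.LocallyFinite] [Fact G.Preconnected] (h : OneEnded G)
    {K : Finset X} {C C' : G.ComponentCompl K} (hC : C.supp.Infinite)
    (hC' : C'.supp.Infinite) : C = C' := by
  obtain ⟨e, rfl⟩ := exists_endSpace_apply_eq C hC
  obtain ⟨e', rfl⟩ := exists_endSpace_apply_eq C' hC'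
  obtain ⟨e₀, he₀⟩ := h
  rw [he₀ e, he₀ e']

lemma oneEnded_of_existsUnique_infinite
    (h : ∀ K : Finset X, ∃! C : G.ComponentCompl K, C.supp.Infinite) : OneEnded G := by
  choose f hf huniq using h
  refine ⟨⟨f, fun K L hKL => huniq K _ ((f L).hom_infinite _ (hf L))⟩, fun e => ?_⟩
  refine Subtype.ext (funext fun K => huniq K _ ?_)
  exact (e.1 K).infinite_iff_in_all_ranges.2 fun L hKL => ⟨e.1 L, e.2 K L hKL⟩

lemma mapsTo_compl_coe_preimage (f : X → Y) (K : Finset Y) (hf : InjOn f (f ⁻¹' K)) :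
    MapsTo f (K.preimage f hf : Set X)ᶜ (K : Set Y)ᶜ :=
  fun _ hx hK => hx (Finset.mem_preimage.2 hK)

lemma ComponentCompl.exists_infinite_mapsTo [G.LocallyFinite] [Fact G.Preconnected]
    {H : SimpleGraph Y} (φ : G →g H) (hφ : Function.Injective φ) {K : Finset Y}
    {C : H.ComponentCompl K} (hC : (φ ⁻¹' C.supp).Infinite) :
    ∃ C' : G.ComponentCompl (K.preimage φ hφ.injOn), C'.supp.Infinite ∧ MapsTo φ C' C := by
  have hsub : φ ⁻¹' C.supp ⊆ (K.preimage φ hφ.injOn : Set X)ᶜ :=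
    fun x hx hxK => C.notMem_of_mem hx (Finset.mem_preimage.1 hxK)
  obtain ⟨C', hC'⟩ := exists_inter_infinite (G := G) hC hsub
  obtain ⟨x, hxC, hxC'⟩ := hC'.nonempty
  exact ⟨C', hC'.mono inter_subset_right,
    mapsTo_of_mem φ (mapsTo_compl_coe_preimage φ K _) hxC' hxC⟩

theorem oneEnded_of_hom_of_infinite_preimage {F : SimpleGraph Z} {H : SimpleGraph Y}
    [F.LocallyFinite] [Fact F.Preconnected] (hF : OneEnded F) (κ : F →g H)
    (hκ : Function.Injective κ)
    (hmeet : ∀ (K : Finset Y) (C : H.ComponentCompl K), C.supp.Infinite →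
      (κ ⁻¹' C.supp).Infinite) :
    OneEnded H := by
  have := hF.infinite
  refine oneEnded_of_existsUnique_infinite fun K => ?_
  set L := K.preimage κ hκ.injOn
  obtain ⟨CF, hCF⟩ :=
    ComponentCompl.exists_inter_infinite (G := F) L.finite_toSet.infinite_compl subset_rfl
  replace hCF : CF.supp.Infinite := hCF.mono inter_subset_right
  obtain ⟨w, hw⟩ := hCF.nonempty
  set C₀ := H.componentComplMk (mapsTo_compl_coe_preimage κ K _ (CF.notMem_of_mem hw))
  have hCF₀ : MapsTo κ CF C₀ := ComponentCompl.mapsTo_of_mem κ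
    (mapsTo_compl_coe_preimage κ K _) hw (H.componentComplMk_mem _)
  refine ⟨C₀, (hCF.image hκ.injOn).mono hCF₀.image_subset, fun C hC => ?_⟩
  obtain ⟨C', hC'inf, hC'⟩ := ComponentCompl.exists_infinite_mapsTo κ hκ (hmeet K C hC)
  obtain rfl : C' = CF := hF.eq_of_infinite hC'inf hCF
  exact ComponentCompl.eq_of_mem_of_mem (hC' hw) (hCF₀ hw)

lemma infinite_preimage_inter_of_endBoundary_eq_univ [G.LocallyFinite] [Fact G.Preconnected]
    {H : SimpleGraph Y} (ι : G →g H) (hι : Function.Injective ι) {D : Set X}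
    (hD : endBoundary G D = univ) {K : Finset Y} {C : H.ComponentCompl K}
    (hC : (ι ⁻¹' C.supp).Infinite) : (ι ⁻¹' C.supp ∩ D).Infinite := by
  obtain ⟨C', hC'inf, hC'⟩ := ComponentCompl.exists_infinite_mapsTo ι hι hC
  obtain ⟨e, he⟩ := exists_endSpace_apply_eq C' hC'inf
  have hdense : (C'.supp ∩ D).Infinite := he ▸ (hD ▸ mem_univ e : e ∈ endBoundary G D) _
  exact hdense.mono (inter_subset_inter_left _ hC')

end SimpleGraph

namespace gluingSum

variable {G : SimpleGraph V} {F : SimpleGraph W} {D : Set V} {ψ : V → W}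

lemma mk_inr_injective :
    Function.Injective fun w : W => Quotient.mk (glueSetoid D ψ) (Sum.inr w) := by
  intro w w' h
  simpa using Setoid.ker_def.1 (Quotient.exact h)

lemma mk_inl_injective (hψ : InjOn ψ D) :
    Function.Injective fun v : V => Quotient.mk (glueSetoid D ψ) (Sum.inl v) := by
  intro v v' h
  have h' := Setoid.ker_def.1 (Quotient.exact h)
  by_cases hv : v ∈ D <;> by_cases hv' : v' ∈ D <;> simp [hv, hv'] at h'
  exacts [hψ hv hv' h', h']

lemma adj_mk {x y : V ⊕ W} (hxy : (sumGraph G F).Adj x y)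
    (hne : Quotient.mk (glueSetoid D ψ) x ≠ Quotient.mk _ y) :
    (gluingSum G F D ψ).Adj (Quotient.mk _ x) (Quotient.mk _ y) :=
  (fromRel_adj _ _ _).2 ⟨hne, Or.inl ⟨x, y, rfl, rfl, hxy⟩⟩

variable (G F) in
/-- Without `hψ`, two adjacent vertices of `D` could be glued to the same vertex of `F`. -/
noncomputable def inl (hψ : InjOn ψ D) : G →g gluingSum G F D ψ where
  toFun v := Quotient.mk _ (Sum.inl v)
  map_rel' h := adj_mk (Or.inl ⟨_, _, rfl, rfl, h⟩) fun he => h.ne (mk_inl_injective hψ he)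

variable (G F) in
noncomputable def inr : F →g gluingSum G F D ψ where
  toFun w := Quotient.mk _ (Sum.inr w)
  map_rel' h := adj_mk (Or.inr ⟨_, _, rfl, rfl, h⟩) fun he => h.ne (mk_inr_injective he)

lemma inl_apply_of_mem (hψ : InjOn ψ D) {v : V} (hv : v ∈ D) :
    inl G F hψ v = inr G F (ψ v) :=
  Quotient.sound (Setoid.ker_def.2 (by simp [hv]))

variable (G F) in
lemma infinite_preimage_inl_or_inr (hψ : InjOn ψ D) {S : Set (Quotient (glueSetoid D ψ))}
    (hS : S.Infinite) :
    (inl G F hψ ⁻¹' S).Infinite ∨ (inr G F ⁻¹' S).Infinite := by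
  by_contra! h
  refine hS (((h.1.image (inl G F hψ)).union (h.2.image (inr G F))).subset ?_)
  intro q hq
  obtain ⟨v | w, rfl⟩ := Quotient.exists_rep q
  exacts [Or.inl ⟨v, hq, rfl⟩, Or.inr ⟨w, hq, rfl⟩]

end gluingSum

theorem gluingSum_oneEnded_general
    (G : SimpleGraph V) (F : SimpleGraph W)
    (hGlf : ∀ v, (G.neighborSet v).Finite) (hFlf : ∀ w, (F.neighborSet w).Finite)
    (hGc : G.Connected) (hFc : F.Connected) (hF1 : OneEnded F)
    (D : Set V) (ψ : V → W) (hψ : Set.InjOn ψ D)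
    (hdense : endBoundary G D = Set.univ) :
    OneEnded (gluingSum G F D ψ) := by
  have : G.LocallyFinite := fun v => (hGlf v).fintype
  have : F.LocallyFinite := fun w => (hFlf w).fintype
  have : Fact G.Preconnected := ⟨hGc.preconnected⟩
  have : Fact F.Preconnected := ⟨hFc.preconnected⟩
  refine oneEnded_of_hom_of_infinite_preimage hF1 (gluingSum.inr G F) gluingSum.mk_inr_injective
    fun K C hC => ?_
  refine (gluingSum.infinite_preimage_inl_or_inr G F hψ hC).elim (fun hG => ?_) id
  have hDC := infinite_preimage_inter_of_endBoundary_eq_univ (gluingSum.inl G F hψ)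
    (gluingSum.mk_inl_injective hψ) hdense hG
  refine (hDC.image (hψ.mono inter_subset_right)).mono ?_
  rintro _ ⟨v, ⟨hvC, hvD⟩, rfl⟩
  rwa [mem_preimage, ← gluingSum.inl_apply_of_mem hψ hvD]

/-- if `dom ψ` is dense for `Ω(G)`, then `G ⊕_ψ F` is one-ended. -/
theorem gluingSum_oneEnded
    (G : SimpleGraph V) (F : SimpleGraph W)
    (hGlf : ∀ v, (G.neighborSet v).Finite) (hFlf : ∀ w, (F.neighborSet w).Finite)
    (hGc : G.Connected) (hFc : F.Connected) (hF1 : OneEnded F)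
    (D : Set V) (ψ : V → W) (hψ : Set.InjOn ψ D) (hD : D.Infinite)
    (hdense : endBoundary G D = Set.univ) :
    OneEnded (gluingSum G F D ψ) :=
  gluingSum_oneEnded_general G F hGlf hFlf hGc hFc hF1 D ψ hψ hdense
end

section
/- Every locally finite connected graph has either finitely many ends, countably infinitely many ends, or exactly continuum many ends. -/
/-! Connectedness and local finiteness make `V` countable, so the end space is a closed subset
of a countable product of countable discrete spaces, hence Polish. An uncountable Polish space
contains a Cantor set, and every Polish space injects into `ℕ → Bool`. -/

open SimpleGraph

variable {V W U : Type*}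

open Cardinal

namespace SimpleGraph

variable {G : SimpleGraph V}

theorem finite_setOf_exists_walk_length [G.LocallyFinite] (u : V) (n : ℕ) :
    {v | ∃ p : G.Walk v u, p.length = n}.Finite := by
  induction n with
  | zero =>
    refine (Set.finite_singleton u).subset ?_
    rintro v ⟨p, hp⟩
    exact Walk.eq_of_length_eq_zero hp
  | succ n ih =>
    refine (ih.biUnion fun w _ => (G.neighborSet w).toFinite).subset ?_
    rintro v ⟨p, hp⟩
    cases p with
    | nil => simp at hp
    | cons hvw q => exact Set.mem_biUnion ⟨q, Nat.succ_injective hp⟩ hvw.symm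

theorem Preconnected.countable_of_locallyFinite [G.LocallyFinite] (hG : G.Preconnected) :
    Countable V := by
  rcases isEmpty_or_nonempty V with _ | ⟨⟨u⟩⟩
  · infer_instance
  have hcover : ⋃ n, {v | ∃ p : G.Walk v u, p.length = n} = Set.univ :=
    Set.eq_univ_of_forall fun v => Set.mem_iUnion.2 ⟨_, (hG v u).some, rfl⟩
  rw [← Set.countable_univ_iff, ← hcover]
  exact Set.countable_iUnion fun n => (finite_setOf_exists_walk_length u n).countable

instance [Countable V] (K : Set V) : Countable (G.ComponentCompl K) :=
  inferInstanceAs (Countable (Quot _))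

instance (K : Set V) : DiscreteTopology (G.ComponentCompl K) := ⟨rfl⟩

end SimpleGraph

theorem isClosed_setOf_compatible_componentCompl (G : SimpleGraph V) :
    IsClosed {f : ∀ K : Finset V, G.ComponentCompl (K : Set V) |
      ∀ (K L : Finset V) (h : K ⊆ L), (f L).hom (by exact_mod_cast h) = f K} := by
  simp only [Set.ofPred_forall]
  exact isClosed_iInter fun K => isClosed_iInter fun L => isClosed_iInter fun h =>
    isClosed_eq (continuous_of_discreteTopology.comp (continuous_apply L)) (continuous_apply K)

instance [Countable V] (G : SimpleGraph V) : PolishSpace (EndSpace G) :=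
  (isClosed_setOf_compatible_componentCompl G).polishSpace

theorem PolishSpace.mk_le_continuum (X : Type*) [TopologicalSpace X] [PolishSpace X] :
    #X ≤ 𝔠 := by
  borelize X
  obtain ⟨f, -, hf⟩ := MeasurableSpace.measurable_injection_nat_bool_of_countablySeparated X
  simpa using lift_mk_le'.mpr ⟨⟨f, hf⟩⟩

theorem PolishSpace.continuum_le_mk_of_not_countable {X : Type*} [TopologicalSpace X]
    [PolishSpace X] (h : ¬Countable X) : 𝔠 ≤ #X := by
  obtain ⟨f, -, -, hf⟩ := isClosed_univ.exists_nat_bool_injection_of_not_countable (α := X)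
    (by rwa [Set.countable_univ_iff])
  simpa using lift_mk_le'.mpr ⟨⟨f, hf⟩⟩

theorem PolishSpace.finite_or_mk_eq_aleph0_or_mk_eq_continuum (X : Type*) [TopologicalSpace X]
    [PolishSpace X] : Finite X ∨ #X = ℵ₀ ∨ #X = 𝔠 := by
  by_cases hX : Countable X
  · rcases finite_or_infinite X with h | h
    · exact .inl h
    · exact .inr (.inl (mk_eq_aleph0 X))
  · exact .inr (.inr ((mk_le_continuum X).antisymm (continuum_le_mk_of_not_countable hX)))

/-- a locally finite connected graph has finitely many, countably infinitely
many, or exactly continuum many ends. -/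
theorem end_cardinality_trichotomy (G : SimpleGraph V)
    (hlf : ∀ v, (G.neighborSet v).Finite) (hc : G.Connected) :
    Finite (EndSpace G) ∨ Cardinal.mk (EndSpace G) = Cardinal.aleph0 ∨
      Cardinal.mk (EndSpace G) = Cardinal.continuum := by
  let : G.LocallyFinite := fun v => (hlf v).fintype
  have : Countable V := hc.preconnected.countable_of_locallyFinite
  exact PolishSpace.finite_or_mk_eq_aleph0_or_mk_eq_continuum (EndSpace G)
end
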